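/- Let Γ ∈ ℝ^{n×n} be positive semidefinite, let M : [0, ∞) → ℝ^{n×n} be measurable with τ ↦ ‖M(τ)‖² locally integrable, and let U, W : [0, ∞) → ℝ^{n×n} take positive semidefinite symmetric values, with U monotone in the Loewner order (s ≤ t implies U(s) ≤ U(t)), satisfying the Volterra covariance equation U(t) = Γ ∘ ∫_0^t M(t − τ) U(τ) M(t − τ)ᵀ dτ + W(t) for all t ≥ 0. Then for every T > 0 and every integer k ≥ 1, U(kT) ≥ L_T( U((k−1)T) ) + W(kT) in the Loewner order, where L_T(X) := Γ ∘ ∫_0^T M(s) X M(s)ᵀ ds. -/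

import Mathlib

open MeasureTheory Matrix

/-- The spectral norm of a real matrix: the operator norm induced by the Euclidean norms. -/
noncomputable def specNorm {m n : ℕ} (A : Matrix (Fin m) (Fin n) ℝ) : ℝ :=
  ‖LinearMap.toContinuousLinearMap (Matrix.toEuclideanLin A)‖

/-- The truncated loop gain operator `L_T(X) = Γ ∘ ∫₀ᵀ M(s) X M(s)ᵀ ds`. -/
noncomputable def loopGainT {n : ℕ} (Γ : Matrix (Fin n) (Fin n) ℝ)
    (M : ℝ → Matrix (Fin n) (Fin n) ℝ) (T : ℝ) (X : Matrix (Fin n) (Fin n) ℝ) :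
    Matrix (Fin n) (Fin n) ℝ :=
  Γ ⊙ Matrix.of fun i j => ∫ s in (0:ℝ)..T, (M s * X * (M s)ᵀ) i j

lemma abs_coord_le_norm {m : ℕ} (x : EuclideanSpace ℝ (Fin m)) (i : Fin m) : |x i| ≤ ‖x‖ := by
  rw [EuclideanSpace.norm_eq]
  rw [show |x i| = Real.sqrt (‖x i‖ ^ 2) by rw [Real.sqrt_sq (norm_nonneg _)]; exact (Real.norm_eq_abs _).symm]
  exact Real.sqrt_le_sqrt (Finset.single_le_sum (f := fun k => ‖x k‖ ^ 2)
    (fun k _ => by positivity) (Finset.mem_univ i))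

lemma abs_entry_le_specNorm {m n : ℕ} (A : Matrix (Fin m) (Fin n) ℝ) (i : Fin m) (j : Fin n) :
    |A i j| ≤ specNorm A := by
  set L := LinearMap.toContinuousLinearMap (Matrix.toEuclideanLin A)
  set v : EuclideanSpace ℝ (Fin n) := EuclideanSpace.single j 1
  have hcoord : L v i = A i j := by
    show ((WithLp.equiv 2 (Fin m → ℝ)).symm (A *ᵥ (WithLp.equiv 2 (Fin n → ℝ)) v)) i = A i j
    rw [show (WithLp.equiv 2 (Fin n → ℝ)) v = Pi.single j 1 from rfl]
    simp [Matrix.mulVec_single]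
  calc |A i j| ≤ ‖L v‖ := hcoord ▸ abs_coord_le_norm (L v) i
    _ ≤ ‖L‖ * ‖v‖ := L.le_opNorm v
    _ = specNorm A := by simp [v, EuclideanSpace.norm_single, specNorm, L]

lemma specNorm_nonneg {m n : ℕ} (A : Matrix (Fin m) (Fin n) ℝ) : 0 ≤ specNorm A :=
  norm_nonneg _

theorem posSemidef_hadamard {n : ℕ} {A B : Matrix (Fin n) (Fin n) ℝ}
    (hA : A.PosSemidef) (hB : B.PosSemidef) : (A ⊙ B).PosSemidef := by
  obtain ⟨C, hC⟩ : ∃ C : Matrix (Fin n) (Fin n) ℝ, A = Cᴴ * C := by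
    open scoped MatrixOrder in
    obtain ⟨X, hX, -, hXA⟩ := CFC.exists_sqrt_of_isSelfAdjoint_of_quasispectrumRestricts
      hA.isHermitian (QuasispectrumRestricts.nnreal_of_nonneg hA.nonneg)
    exact ⟨X, by rw [← hXA, ← star_eq_conjTranspose, hX.star_eq]⟩
  refine Matrix.PosSemidef.of_dotProduct_mulVec_nonneg ?_ ?_
  · ext i j
    simp only [conjTranspose_apply, hadamard_apply, star_trivial]
    rw [← hA.1.apply i j, ← hB.1.apply i j]
    simp
  · intro x
    have hAij : ∀ i j, A i j = ∑ k, C k i * C k j := by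
      intro i j
      rw [hC]
      simp [Matrix.mul_apply, conjTranspose_apply]
    set F : Fin n → Fin n → Fin n → ℝ := fun i j k => x i * B i j * x j * C k i * C k j with hF
    have expand : star x ⬝ᵥ ((A ⊙ B) *ᵥ x) = ∑ i, ∑ j, ∑ k, F i j k := by
      simp only [dotProduct, mulVec, hadamard_apply, star_trivial, Finset.mul_sum]
      refine Finset.sum_congr rfl fun i _ => Finset.sum_congr rfl fun j _ => ?_
      rw [hAij i j, Finset.sum_mul, Finset.sum_mul, Finset.mul_sum]
      exact Finset.sum_congr rfl fun k _ => by simp only [hF]; ring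
    have rhsexpand : ∀ k, (fun i => C k i * x i) ⬝ᵥ (B *ᵥ fun i => C k i * x i)
        = ∑ i, ∑ j, F i j k := by
      intro k
      simp only [dotProduct, mulVec, Finset.mul_sum]
      refine Finset.sum_congr rfl fun i _ => Finset.sum_congr rfl fun j _ => ?_
      simp only [hF]; ring
    have swap : ∑ i, ∑ j, ∑ k, F i j k = ∑ k, ∑ i, ∑ j, F i j k :=
      (Finset.sum_congr rfl fun i _ => Finset.sum_comm).trans Finset.sum_comm
    rw [expand, swap]
    refine Finset.sum_nonneg fun k _ => ?_
    rw [← rhsexpand k]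
    simpa using hB.dotProduct_mulVec_nonneg (fun i => C k i * x i)

lemma quadform_single {n : ℕ} (P : Matrix (Fin n) (Fin n) ℝ) (a : Fin n) :
    (Pi.single a 1 : Fin n → ℝ) ⬝ᵥ (P *ᵥ Pi.single a 1) = P a a := by
  simp [Matrix.mulVec_single, dotProduct, Pi.single_apply]

lemma single_quadform {n : ℕ} (P : Matrix (Fin n) (Fin n) ℝ) (a b : Fin n) :
    (Pi.single a 1 : Fin n → ℝ) ⬝ᵥ (P *ᵥ Pi.single b 1) = P a b := by
  simp [Matrix.mulVec_single, dotProduct, Pi.single_apply]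

lemma diag_le_of_psd_sub {n : ℕ} {P Q : Matrix (Fin n) (Fin n) ℝ}
    (h : (Q - P).PosSemidef) (a : Fin n) : P a a ≤ Q a a := by
  have := h.dotProduct_mulVec_nonneg (Pi.single a 1)
  simp only [star_trivial, Matrix.sub_mulVec, dotProduct_sub, quadform_single] at this
  linarith

lemma abs_entry_le_of_psd {n : ℕ} {P : Matrix (Fin n) (Fin n) ℝ}
    (hP : P.PosSemidef) (a b : Fin n) : |P a b| ≤ (P a a + P b b) / 2 := by
  rcases eq_or_ne a b with rfl | hab
  · have h0 : 0 ≤ P a a := by simpa [quadform_single] using hP.dotProduct_mulVec_nonneg (Pi.single a 1)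
    rw [abs_of_nonneg h0]; linarith
  · have hsym : P b a = P a b := by rw [← hP.1.apply a b]; simp
    have h1 := hP.dotProduct_mulVec_nonneg (Pi.single a 1 + Pi.single b 1)
    have h2 := hP.dotProduct_mulVec_nonneg (Pi.single a 1 - Pi.single b 1)
    simp only [star_trivial, Matrix.mulVec_add, Matrix.mulVec_sub, dotProduct_add,
      dotProduct_sub, add_dotProduct, sub_dotProduct, quadform_single, single_quadform] at h1 h2
    rw [hsym] at h1 h2
    rw [abs_le]
    constructor <;> nlinarith

lemma integral_matrix_posSemidef {n : ℕ} {a b : ℝ} (hab : a ≤ b)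
    {A : ℝ → Matrix (Fin n) (Fin n) ℝ}
    (hint : ∀ i j, IntervalIntegrable (fun s => A s i j) volume a b)
    (hpsd : ∀ s ∈ Set.Icc a b, (A s).PosSemidef) :
    (Matrix.of fun i j => ∫ s in a..b, A s i j).PosSemidef := by
  refine Matrix.PosSemidef.of_dotProduct_mulVec_nonneg ?_ ?_
  · ext i j
    simp only [conjTranspose_apply, Matrix.of_apply, star_trivial]
    refine intervalIntegral.integral_congr fun s hs => ?_
    rw [Set.uIcc_of_le hab] at hs
    rw [← (hpsd s hs).1.apply i j]; simp
  · intro x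
    have hxint : ∀ i : Fin n,
        IntervalIntegrable (fun s => x i * ∑ j, A s i j * x j) volume a b := by
      intro i
      apply IntervalIntegrable.const_mul
      have h := IntervalIntegrable.sum (μ := volume) (a := a) (b := b) Finset.univ
        (f := fun j s => A s i j * x j) (fun j _ => (hint i j).mul_const (x j))
      rwa [Finset.sum_fn] at h
    have key : star x ⬝ᵥ ((Matrix.of fun i j => ∫ s in a..b, A s i j) *ᵥ x)
        = ∫ s in a..b, x ⬝ᵥ (A s *ᵥ x) := by
      simp only [dotProduct, mulVec, Matrix.of_apply, star_trivial]
      rw [intervalIntegral.integral_finset_sum (fun i _ => hxint i)]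
      refine Finset.sum_congr rfl fun i _ => ?_
      have hinner : ∑ j, (∫ s in a..b, A s i j) * x j
          = ∫ s in a..b, ∑ j, A s i j * x j := by
        have h1 : ∀ j : Fin n, (∫ s in a..b, A s i j) * x j = ∫ s in a..b, A s i j * x j :=
          fun j => (intervalIntegral.integral_mul_const (x j) _).symm
        simp only [h1]
        exact (intervalIntegral.integral_finset_sum (fun j _ => (hint i j).mul_const (x j))).symm
      rw [hinner, ← intervalIntegral.integral_const_mul]
    rw [key]
    exact intervalIntegral.integral_nonneg hab fun u hu => by simpa using (hpsd u hu).dotProduct_mulVec_nonneg x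

lemma triple_entry {n : ℕ} (Mm X : Matrix (Fin n) (Fin n) ℝ) (i j : Fin n) :
    (Mm * X * Mmᵀ) i j = ∑ b, (∑ a, Mm i a * X a b) * Mm j b := by
  simp [Matrix.mul_apply, Matrix.transpose_apply]

lemma triple_entry_bound {n : ℕ} (Mm X : Matrix (Fin n) (Fin n) ℝ) {c : ℝ} (hc : 0 ≤ c)
    (hX : ∀ a b, |X a b| ≤ c) (i j : Fin n) :
    |(Mm * X * Mmᵀ) i j| ≤ (n : ℝ) ^ 2 * c * specNorm Mm ^ 2 := by
  have hM : ∀ p q, |Mm p q| ≤ specNorm Mm := abs_entry_le_specNorm Mm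
  have hsN0 : 0 ≤ specNorm Mm := specNorm_nonneg Mm
  have inner : ∀ b, |∑ a, Mm i a * X a b| ≤ (n : ℝ) * (specNorm Mm * c) := by
    intro b
    calc |∑ a, Mm i a * X a b| ≤ ∑ a, |Mm i a * X a b| := Finset.abs_sum_le_sum_abs _ _
      _ ≤ ∑ _a : Fin n, specNorm Mm * c := Finset.sum_le_sum fun a _ => by
          rw [abs_mul]; exact mul_le_mul (hM i a) (hX a b) (abs_nonneg _) hsN0
      _ = (n : ℝ) * (specNorm Mm * c) := by
          simp [Finset.sum_const, Finset.card_univ, nsmul_eq_mul]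
  rw [triple_entry]
  calc |∑ b, (∑ a, Mm i a * X a b) * Mm j b|
      ≤ ∑ b, |(∑ a, Mm i a * X a b)| * |Mm j b| := by
        refine (Finset.abs_sum_le_sum_abs _ _).trans ?_
        simp only [abs_mul]; exact le_rfl
    _ ≤ ∑ _b : Fin n, ((n : ℝ) * (specNorm Mm * c)) * specNorm Mm :=
        Finset.sum_le_sum fun b _ => mul_le_mul (inner b) (hM j b) (abs_nonneg _) (by positivity)
    _ = (n : ℝ) ^ 2 * c * specNorm Mm ^ 2 := by
        simp [Finset.sum_const, Finset.card_univ, nsmul_eq_mul]; ring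

/-- If `U` is psd-valued, Loewner-monotone and satisfies the Volterra
covariance equation `U(t) = Γ ∘ ∫₀ᵗ M(t−τ) U(τ) M(t−τ)ᵀ dτ + W(t)`, then for every `T > 0`
and every integer `k ≥ 1` (written as `k + 1` with `k : ℕ`),
`U(kT) ≥ L_T(U((k−1)T)) + W(kT)` in the Loewner order. -/
theorem volterra_covariance_recursion {n : ℕ}
    (Γ : Matrix (Fin n) (Fin n) ℝ) (hΓ : Γ.PosSemidef)
    (M U W : ℝ → Matrix (Fin n) (Fin n) ℝ)
    (hMmeas : ∀ i j, Measurable fun τ => M τ i j)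
    (hMint : ∀ T : ℝ, IntegrableOn (fun τ => specNorm (M τ) ^ 2) (Set.Icc 0 T))
    (hUpsd : ∀ s, 0 ≤ s → (U s).PosSemidef)
    (hWpsd : ∀ s, 0 ≤ s → (W s).PosSemidef)
    (hUmono : ∀ s t : ℝ, 0 ≤ s → s ≤ t → (U t - U s).PosSemidef)
    (hEq : ∀ t : ℝ, 0 ≤ t →
      U t = (Γ ⊙ Matrix.of fun i j =>
          ∫ τ in (0:ℝ)..t, (M (t - τ) * U τ * (M (t - τ))ᵀ) i j) + W t) :
    ∀ (T : ℝ), 0 < T → ∀ k : ℕ,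
      (U ((k + 1 : ℕ) * T)
        - (loopGainT Γ M T (U (k * T)) + W ((k + 1 : ℕ) * T))).PosSemidef := by
  intro T hT k
  have hT0 : (0:ℝ) ≤ T := hT.le
  have hk0 : (0:ℝ) ≤ (k : ℝ) := Nat.cast_nonneg k
  set t : ℝ := ((k : ℝ) + 1) * T with htdef
  have hkT0 : (0:ℝ) ≤ (k : ℝ) * T := by positivity
  have ht0 : (0:ℝ) ≤ t := by positivity
  have hTt : T ≤ t := by nlinarith
  have hkTt : (k : ℝ) * T ≤ t := by nlinarith
  have hcast : ((k + 1 : ℕ) : ℝ) * T = t := by push_cast; ring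
  -- the monotone extension of U
  set V : ℝ → Matrix (Fin n) (Fin n) ℝ := fun s => U (max s 0) with hVdef
  have hVpsd : ∀ s, (V s).PosSemidef := fun s => hUpsd _ (le_max_right _ _)
  have hVmono : ∀ s u : ℝ, s ≤ u → (V u - V s).PosSemidef := fun s u h =>
    hUmono _ _ (le_max_right _ _) (max_le_max h le_rfl)
  have hVeq : ∀ s, 0 ≤ s → V s = U s := fun s hs => by
    simp only [hVdef]; rw [max_eq_left hs]
  -- measurability of entries of V
  have hVmeas : ∀ i j, Measurable fun s => V s i j := by
    intro i j
    have hq : ∀ x : Fin n → ℝ, Monotone fun s => x ⬝ᵥ (V s *ᵥ x) := by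
      intro x s u hsu
      have h := (hVmono s u hsu).dotProduct_mulVec_nonneg x
      simp only [star_trivial, Matrix.sub_mulVec, dotProduct_sub] at h
      linarith
    have hm : ∀ x : Fin n → ℝ, Measurable fun s => x ⬝ᵥ (V s *ᵥ x) := fun x =>
      (hq x).measurable
    have hrepr : (fun s => V s i j) = fun s =>
        (((Pi.single i 1 + Pi.single j 1 : Fin n → ℝ)) ⬝ᵥ
            (V s *ᵥ (Pi.single i 1 + Pi.single j 1))
          - (Pi.single i 1 : Fin n → ℝ) ⬝ᵥ (V s *ᵥ Pi.single i 1)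
          - (Pi.single j 1 : Fin n → ℝ) ⬝ᵥ (V s *ᵥ Pi.single j 1)) / 2 := by
      funext s
      have hsym : V s j i = V s i j := by rw [← (hVpsd s).1.apply i j]; simp
      simp only [Matrix.mulVec_add, dotProduct_add, add_dotProduct,
        quadform_single, single_quadform, hsym]
      ring
    rw [hrepr]
    exact (((hm _).sub (hm _)).sub (hm _)).div_const 2
  -- the uniform entry bound on [−∞, t]
  set c : ℝ := ∑ a, V t a a with hcdef
  have hdiag0 : ∀ a, 0 ≤ V t a a := fun a => by
    simpa [quadform_single] using (hVpsd t).dotProduct_mulVec_nonneg (Pi.single a 1)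
  have hc0 : 0 ≤ c := Finset.sum_nonneg fun a _ => hdiag0 a
  have hVbnd : ∀ s, s ≤ t → ∀ a b, |V s a b| ≤ c := by
    intro s hs a b
    have h1 := abs_entry_le_of_psd (hVpsd s) a b
    have h2 : V s a a ≤ V t a a := diag_le_of_psd_sub (hVmono s t hs) a
    have h3 : V s b b ≤ V t b b := diag_le_of_psd_sub (hVmono s t hs) b
    have h4 : V t a a ≤ c := Finset.single_le_sum (fun a' _ => hdiag0 a') (Finset.mem_univ a)
    have h5 : V t b b ≤ c := Finset.single_le_sum (fun a' _ => hdiag0 a') (Finset.mem_univ b)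
    linarith
  -- the two integrand families
  set G : ℝ → Matrix (Fin n) (Fin n) ℝ := fun s => M s * V (t - s) * (M s)ᵀ with hGdef
  set H : ℝ → Matrix (Fin n) (Fin n) ℝ := fun s => M s * V ((k : ℝ) * T) * (M s)ᵀ with hHdef
  -- measurability of entries
  have hGmeas : ∀ i j, Measurable fun s => G s i j := by
    intro i j
    have : (fun s => G s i j) = fun s => ∑ b, (∑ a, M s i a * V (t - s) a b) * M s j b := by
      funext s; exact triple_entry (M s) (V (t - s)) i j
    rw [this]
    refine Finset.measurable_sum _ fun b _ => Measurable.mul ?_ (hMmeas j b)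
    refine Finset.measurable_sum _ fun a _ => (hMmeas i a).mul ?_
    exact (hVmeas a b).comp (measurable_const.sub measurable_id)
  have hHmeas : ∀ i j, Measurable fun s => H s i j := by
    intro i j
    have : (fun s => H s i j) = fun s => ∑ b, (∑ a, M s i a * V ((k:ℝ)*T) a b) * M s j b := by
      funext s; exact triple_entry (M s) (V ((k:ℝ)*T)) i j
    rw [this]
    refine Finset.measurable_sum _ fun b _ => Measurable.mul ?_ (hMmeas j b)
    exact Finset.measurable_sum _ fun a _ => (hMmeas i a).mul measurable_const
  -- the dominating function
  have hdom : IntegrableOn (fun s => (n : ℝ)^2 * c * specNorm (M s) ^ 2) (Set.Icc 0 t) :=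
    (hMint t).const_mul _
  -- integrability of entries on Icc 0 t
  have hGint : ∀ i j, IntegrableOn (fun s => G s i j) (Set.Icc 0 t) := by
    intro i j
    refine Integrable.mono' hdom ((hGmeas i j).aestronglyMeasurable) ?_
    filter_upwards [ae_restrict_mem measurableSet_Icc] with s hs
    rw [Real.norm_eq_abs]
    exact triple_entry_bound (M s) (V (t - s)) hc0
      (fun a b => hVbnd (t - s) (by linarith [hs.1]) a b) i j
  have hHint : ∀ i j, IntegrableOn (fun s => H s i j) (Set.Icc 0 t) := by
    intro i j
    refine Integrable.mono' hdom ((hHmeas i j).aestronglyMeasurable) ?_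
    filter_upwards [ae_restrict_mem measurableSet_Icc] with s hs
    rw [Real.norm_eq_abs]
    exact triple_entry_bound (M s) (V ((k:ℝ)*T)) hc0
      (fun a b => hVbnd _ hkTt a b) i j
  -- interval integrability on the relevant subintervals
  have hsub0T : Set.uIcc (0:ℝ) T ⊆ Set.uIcc (0:ℝ) t := by
    rw [Set.uIcc_of_le hT0, Set.uIcc_of_le ht0]
    exact Set.Icc_subset_Icc le_rfl hTt
  have hsubTt : Set.uIcc T t ⊆ Set.uIcc (0:ℝ) t := by
    rw [Set.uIcc_of_le hTt, Set.uIcc_of_le ht0]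
    exact Set.Icc_subset_Icc hT0 le_rfl
  have hGii : ∀ i j, IntervalIntegrable (fun s => G s i j) volume 0 t := fun i j =>
    (intervalIntegrable_iff_integrableOn_Ioc_of_le ht0).mpr
      ((hGint i j).mono_set Set.Ioc_subset_Icc_self)
  have hHii : ∀ i j, IntervalIntegrable (fun s => H s i j) volume 0 t := fun i j =>
    (intervalIntegrable_iff_integrableOn_Ioc_of_le ht0).mpr
      ((hHint i j).mono_set Set.Ioc_subset_Icc_self)
  have hGii0T : ∀ i j, IntervalIntegrable (fun s => G s i j) volume 0 T := fun i j =>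
    (hGii i j).mono_set hsub0T
  have hGiiTt : ∀ i j, IntervalIntegrable (fun s => G s i j) volume T t := fun i j =>
    (hGii i j).mono_set hsubTt
  have hHii0T : ∀ i j, IntervalIntegrable (fun s => H s i j) volume 0 T := fun i j =>
    (hHii i j).mono_set hsub0T
  -- rewrite the Volterra integral via change of variables
  have hI : ∀ i j, (∫ τ in (0:ℝ)..t, (M (t - τ) * U τ * (M (t - τ))ᵀ) i j)
      = ∫ s in (0:ℝ)..t, G s i j := by
    intro i j
    have hcongr : Set.EqOn (fun τ => (M (t - τ) * U τ * (M (t - τ))ᵀ) i j)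
        (fun τ => G (t - τ) i j) (Set.uIcc 0 t) := by
      intro τ hτ
      rw [Set.uIcc_of_le ht0] at hτ
      simp only [hGdef]
      rw [show t - (t - τ) = τ by ring, hVeq τ hτ.1]
    rw [intervalIntegral.integral_congr hcongr]
    have := intervalIntegral.integral_comp_sub_left (a := 0) (b := t) (fun s => G s i j) t
    simpa using this
  -- the psd pieces
  set P : Matrix (Fin n) (Fin n) ℝ :=
    Matrix.of (fun i j => ∫ s in (0:ℝ)..T, (G s - H s) i j) with hPdef
  set Q : Matrix (Fin n) (Fin n) ℝ :=
    Matrix.of (fun i j => ∫ s in T..t, G s i j) with hQdef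
  have hPpsd : P.PosSemidef := by
    refine integral_matrix_posSemidef hT0 (fun i j => ?_) (fun s hs => ?_)
    · simpa only [Matrix.sub_apply] using (hGii0T i j).sub (hHii0T i j)
    · have hmono : (V (t - s) - V ((k:ℝ)*T)).PosSemidef := by
        refine hVmono _ _ ?_
        have : (k:ℝ) * T = t - T := by rw [htdef]; ring
        rw [this]
        linarith [hs.2]
      have : G s - H s = M s * (V (t - s) - V ((k:ℝ)*T)) * (M s)ᵀ := by
        simp only [hGdef, hHdef]
        rw [Matrix.mul_sub, Matrix.sub_mul]
      rw [this]
      have hconj := hmono.mul_mul_conjTranspose_same (M s)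
      rwa [Matrix.conjTranspose_eq_transpose_of_trivial] at hconj
  have hQpsd : Q.PosSemidef := by
    refine integral_matrix_posSemidef hTt (fun i j => hGiiTt i j) (fun s hs => ?_)
    have hpsd : (V (t - s)).PosSemidef := hVpsd _
    have hconj := hpsd.mul_mul_conjTranspose_same (M s)
    rwa [Matrix.conjTranspose_eq_transpose_of_trivial] at hconj
  -- entrywise identity
  have hEqt := hEq t ht0
  have hgoal : U (((k + 1 : ℕ) : ℝ) * T) - (loopGainT Γ M T (U ((k:ℝ) * T)) + W (((k + 1 : ℕ) : ℝ) * T))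
      = Γ ⊙ (P + Q) := by
    rw [hcast]
    rw [hEqt]
    unfold loopGainT
    ext i j
    simp only [Matrix.sub_apply, Matrix.add_apply, hadamard_apply, Matrix.of_apply]
    have hIij := hI i j
    have hsplit : ∫ s in (0:ℝ)..t, G s i j
        = (∫ s in (0:ℝ)..T, G s i j) + ∫ s in T..t, G s i j :=
      (intervalIntegral.integral_add_adjacent_intervals (hGii0T i j) (hGiiTt i j)).symm
    have hJ : (∫ s in (0:ℝ)..T, (M s * U ((k:ℝ) * T) * (M s)ᵀ) i j)
        = ∫ s in (0:ℝ)..T, H s i j := by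
      refine intervalIntegral.integral_congr fun s _ => ?_
      simp only [hHdef]
      rw [hVeq _ hkT0]
    have hPij : P i j = (∫ s in (0:ℝ)..T, G s i j) - ∫ s in (0:ℝ)..T, H s i j := by
      simp only [hPdef, Matrix.of_apply]
      rw [show (fun s => (G s - H s) i j) = fun s => G s i j - H s i j from rfl]
      exact intervalIntegral.integral_sub (hGii0T i j) (hHii0T i j)
    rw [hIij, hsplit, hJ]
    simp only [hPij, hQdef, Matrix.of_apply]
    ring
  rw [hgoal]
  exact posSemidef_hadamard hΓ (hPpsd.add hQpsd)
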